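/- arXiv:1807.09122 — 3 statements merged into one kernel-verified Lean document; each statement's English description precedes it below -/
import Mathlib

section
/- Let g, l1, l2 be positive real numbers and let φ : ℝ → ℝ be a smooth function. Define x = -l1·l2·φ⁽⁴⁾ - g·(l1+l2)·φ'' - g²·φ, θ1 = l2·φ⁽⁴⁾ + g·φ'', and θ2 = l1·φ⁽⁴⁾ + g·φ''. Then the double-pendulum control equations hold identically: x'' + l1·θ1'' + g·θ1 = 0 and x'' + l2·θ2'' + g·θ2 = 0. -/
/-- The double pendulum control equations are identically satisfied by the
parametrization of the system by a single potential `φ`. -/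
theorem double_pendulum_parametrization
    (g l1 l2 : ℝ) (hg : 0 < g) (hl1 : 0 < l1) (hl2 : 0 < l2)
    (φ : ℝ → ℝ) (hφ : ContDiff ℝ (⊤ : ℕ∞) φ)
    (x θ1 θ2 : ℝ → ℝ)
    (hx : x = fun t => -(l1 * l2) * iteratedDeriv 4 φ t
        - g * (l1 + l2) * iteratedDeriv 2 φ t - g ^ 2 * φ t)
    (hθ1 : θ1 = fun t => l2 * iteratedDeriv 4 φ t + g * iteratedDeriv 2 φ t)
    (hθ2 : θ2 = fun t => l1 * iteratedDeriv 4 φ t + g * iteratedDeriv 2 φ t) :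
    ∀ t : ℝ,
      deriv (deriv x) t + l1 * deriv (deriv θ1) t + g * θ1 t = 0 ∧
      deriv (deriv x) t + l2 * deriv (deriv θ2) t + g * θ2 t = 0 := by
  have hd : ∀ n : ℕ, Differentiable ℝ (iteratedDeriv n φ) := fun n =>
    hφ.differentiable_iteratedDeriv n (by exact_mod_cast ENat.coe_lt_top n)
  have key : ∀ (a b c : ℝ) (m n k : ℕ),
      deriv (fun t => a * iteratedDeriv m φ t + b * iteratedDeriv n φ t
        + c * iteratedDeriv k φ t)
      = fun t => a * iteratedDeriv (m+1) φ t + b * iteratedDeriv (n+1) φ t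
        + c * iteratedDeriv (k+1) φ t := by
    intro a b c m n k
    funext t
    rw [iteratedDeriv_succ, iteratedDeriv_succ, iteratedDeriv_succ,
      deriv_fun_add (f := fun y => a * iteratedDeriv m φ y + b * iteratedDeriv n φ y)
        (((hd m).const_mul a).add ((hd n).const_mul b)).differentiableAt
        ((hd k).const_mul c).differentiableAt,
      deriv_fun_add ((hd m).const_mul a).differentiableAt
        ((hd n).const_mul b).differentiableAt,
      deriv_const_mul a (hd m t), deriv_const_mul b (hd n t),
      deriv_const_mul c (hd k t)]
  have hx' : x = fun t => (-(l1 * l2)) * iteratedDeriv 4 φ t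
      + (-(g * (l1 + l2))) * iteratedDeriv 2 φ t + (-(g ^ 2)) * iteratedDeriv 0 φ t := by
    rw [hx]; funext t; rw [iteratedDeriv_zero]; ring
  have hθ1' : θ1 = fun t => l2 * iteratedDeriv 4 φ t + g * iteratedDeriv 2 φ t
      + (0 : ℝ) * iteratedDeriv 0 φ t := by
    rw [hθ1]; funext t; ring
  have hθ2' : θ2 = fun t => l1 * iteratedDeriv 4 φ t + g * iteratedDeriv 2 φ t
      + (0 : ℝ) * iteratedDeriv 0 φ t := by
    rw [hθ2]; funext t; ring
  intro t
  rw [hx', hθ1', hθ2', key, key, key, key, key, key]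
  constructor <;> · simp only []; ring
end

section
/- Let g, l1, l2 be positive real numbers with l1 ≠ l2. If λ1, λ2 : ℝ → ℝ are twice differentiable functions satisfying λ1'' + λ2'' = 0, l1·λ1'' + g·λ1 = 0, and l2·λ2'' + g·λ2 = 0 (at every point of ℝ), then λ1 = 0 and λ2 = 0 identically. -/
/-!
Adding `l₂` times the second equation and `l₁` times the third, and using the first, gives
`g (l₂ λ₁ + l₁ λ₂) = 0`, a linear relation between `λ₁` and `λ₂`. Differentiating it twice yields
`l₂ λ₁'' + l₁ λ₂'' = 0`, which together with `λ₂'' = -λ₁''` and `l₁ ≠ l₂` forces `λ₁'' = 0`, so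
`λ₁'' = λ₂'' = 0` and the last two equations read `g λ₁ = g λ₂ = 0`.
-/

section LinearRelation

variable {𝕜 𝕜' : Type*} [NontriviallyNormedField 𝕜] [NormedDivisionRing 𝕜'] [NormedAlgebra 𝕜 𝕜']

/-- No differentiability is needed: over a division ring `deriv (fun x => c * f x) = c * deriv f`
holds unconditionally (`deriv_const_mul_field'`). -/
theorem deriv_deriv_of_linear_relation {a b : 𝕜'} {f h : 𝕜 → 𝕜'}
    (hrel : ∀ x, a * f x + b * h x = 0) (x : 𝕜) :
    a * deriv (deriv f) x + b * deriv (deriv h) x = 0 := by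
  have hfun : (fun x => b * h x) = fun x => -a * f x :=
    funext fun x => by rw [neg_mul, eq_neg_iff_add_eq_zero, add_comm, hrel]
  have h'' := congrFun (congrArg (fun u => deriv (deriv u)) hfun) x
  simp only [deriv_const_mul_field'] at h''
  rw [h'', neg_mul, add_neg_cancel]

end LinearRelation

theorem double_pendulum_adjoint_injective_general
    (g l1 l2 : ℝ) (hg : 0 < g) (hne : l1 ≠ l2)
    (lam1 lam2 : ℝ → ℝ)
    (h1 : ∀ t : ℝ, deriv (deriv lam1) t + deriv (deriv lam2) t = 0)
    (h2 : ∀ t : ℝ, l1 * deriv (deriv lam1) t + g * lam1 t = 0)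
    (h3 : ∀ t : ℝ, l2 * deriv (deriv lam2) t + g * lam2 t = 0) :
    (∀ t : ℝ, lam1 t = 0) ∧ (∀ t : ℝ, lam2 t = 0) := by
  have hrel : ∀ t, l2 * lam1 t + l1 * lam2 t = 0 := fun t => by
    have : g * (l2 * lam1 t + l1 * lam2 t) = 0 := by
      linear_combination l2 * h2 t + l1 * h3 t - l1 * l2 * h1 t
    exact (mul_eq_zero.mp this).resolve_left hg.ne'
  have hrel'' := deriv_deriv_of_linear_relation hrel
  have hlam1'' : ∀ t, deriv (deriv lam1) t = 0 := fun t => by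
    have : (l2 - l1) * deriv (deriv lam1) t = 0 := by
      linear_combination hrel'' t - l1 * h1 t
    exact (mul_eq_zero.mp this).resolve_left (sub_ne_zero.mpr hne.symm)
  have hlam2'' : ∀ t, deriv (deriv lam2) t = 0 := fun t => by
    linear_combination h1 t - hlam1'' t
  exact ⟨fun t => by simpa [hlam1'' t, hg.ne'] using h2 t,
    fun t => by simpa [hlam2'' t, hg.ne'] using h3 t⟩

/-- Injectivity of the formal adjoint of the double-pendulum control operator
when the two pendulum lengths are distinct. -/
theorem double_pendulum_adjoint_injective
    (g l1 l2 : ℝ) (hg : 0 < g) (hl1 : 0 < l1) (hl2 : 0 < l2) (hne : l1 ≠ l2)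
    (lam1 lam2 : ℝ → ℝ)
    (hlam1 : Differentiable ℝ lam1) (hlam1' : Differentiable ℝ (deriv lam1))
    (hlam2 : Differentiable ℝ lam2) (hlam2' : Differentiable ℝ (deriv lam2))
    (h1 : ∀ t : ℝ, deriv (deriv lam1) t + deriv (deriv lam2) t = 0)
    (h2 : ∀ t : ℝ, l1 * deriv (deriv lam1) t + g * lam1 t = 0)
    (h3 : ∀ t : ℝ, l2 * deriv (deriv lam2) t + g * lam2 t = 0) :
    (∀ t : ℝ, lam1 t = 0) ∧ (∀ t : ℝ, lam2 t = 0) :=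
  double_pendulum_adjoint_injective_general g l1 l2 hg hne lam1 lam2 h1 h2 h3
end

section
/- Let σ¹¹, σ¹², σ²² : ℝ² → ℝ be smooth functions satisfying the Cauchy equations ∂₁σ¹¹ + ∂₂σ¹² = 0 and ∂₁σ¹² + ∂₂σ²² = 0 on all of ℝ². Then there exists a smooth function λ : ℝ² → ℝ such that σ¹¹ = ∂₂∂₂λ, σ¹² = -∂₁∂₂λ, and σ²² = ∂₁∂₁λ. -/
set_option maxHeartbeats 1600000


open MeasureTheory intervalIntegral Asymptotics Set Filter
open scoped ENNReal NNReal Topology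

variable {E F : Type*} [NormedAddCommGroup E] [NormedSpace ℝ E]
  [NormedAddCommGroup F] [NormedSpace ℝ F] [CompleteSpace F]

noncomputable def pa (F : ℝ × ℝ → ℝ) (p : ℝ × ℝ) : ℝ := fderiv ℝ F p (1, 0)
noncomputable def pb (F : ℝ × ℝ → ℝ) (p : ℝ × ℝ) : ℝ := fderiv ℝ F p (0, 1)

lemma hasDerivAt_pa (g : ℝ × ℝ → ℝ) (hg : Differentiable ℝ g) (a t : ℝ) :
    HasDerivAt (fun a => g (a, t)) (pa g (a, t)) a := by
  have h1 : HasFDerivAt g (fderiv ℝ g (a, t)) (a, t) := (hg (a, t)).hasFDerivAt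
  have h2 : HasDerivAt (fun a : ℝ => ((a : ℝ), t)) ((1 : ℝ), (0 : ℝ)) a := by
    simpa using (hasDerivAt_id a).prodMk (hasDerivAt_const a t)
  exact h1.comp_hasDerivAt a h2

lemma hasDerivAt_pb (g : ℝ × ℝ → ℝ) (hg : Differentiable ℝ g) (a t : ℝ) :
    HasDerivAt (fun t => g (a, t)) (pb g (a, t)) t := by
  have h1 : HasFDerivAt g (fderiv ℝ g (a, t)) (a, t) := (hg (a, t)).hasFDerivAt
  have h2 : HasDerivAt (fun t : ℝ => ((a : ℝ), t)) ((0 : ℝ), (1 : ℝ)) t := by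
    simpa using (hasDerivAt_const t a).prodMk (hasDerivAt_id t)
  exact h1.comp_hasDerivAt t h2

lemma continuous_pa (g : ℝ × ℝ → ℝ) (hg : ContDiff ℝ (⊤ : ℕ∞) g) : Continuous (pa g) := by
  have h : Continuous (fderiv ℝ g) := (contDiff_infty_iff_fderiv.mp hg).2.continuous
  exact (ContinuousLinearMap.apply ℝ ℝ ((1 : ℝ), (0 : ℝ))).continuous.comp h

lemma continuous_pb (g : ℝ × ℝ → ℝ) (hg : ContDiff ℝ (⊤ : ℕ∞) g) : Continuous (pb g) := by
  have h : Continuous (fderiv ℝ g) := (contDiff_infty_iff_fderiv.mp hg).2.continuous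
  exact (ContinuousLinearMap.apply ℝ ℝ ((0 : ℝ), (1 : ℝ))).continuous.comp h

/-- Differentiation under the integral sign (fixed endpoints), in the first variable. -/
lemma hasDerivAt_param (g : ℝ × ℝ → ℝ) (hg : ContDiff ℝ (⊤ : ℕ∞) g) (a₀ b : ℝ) :
    HasDerivAt (fun a => ∫ t in (0:ℝ)..b, g (a, t))
      (∫ t in (0:ℝ)..b, pa g (a₀, t)) a₀ := by
  obtain ⟨M, hM⟩ : ∃ M, ∀ p ∈ Metric.closedBall a₀ 1 ×ˢ uIcc (0:ℝ) b, ‖pa g p‖ ≤ M := by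
    have hcomp : IsCompact (Metric.closedBall a₀ 1 ×ˢ uIcc (0:ℝ) b) :=
      (isCompact_closedBall a₀ 1).prod isCompact_uIcc
    exact hcomp.exists_bound_of_continuousOn (continuous_pa g hg).continuousOn
  have key := intervalIntegral.hasDerivAt_integral_of_dominated_loc_of_deriv_le
    (F := fun a t => g (a, t)) (F' := fun a t => pa g (a, t)) (x₀ := a₀)
    (a := 0) (b := b) (μ := volume) (bound := fun _ => M) (s := Metric.ball a₀ 1) (Metric.ball_mem_nhds a₀ one_pos)
    ?_ ?_ ?_ ?_ ?_ ?_
  · exact key.2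
  · filter_upwards with a
    exact (hg.continuous.comp (continuous_const.prodMk continuous_id)).aestronglyMeasurable
  · exact ((hg.continuous.comp (continuous_const.prodMk continuous_id))).intervalIntegrable 0 b
  · exact ((continuous_pa g hg).comp (continuous_const.prodMk continuous_id)).aestronglyMeasurable
  · apply ae_of_all
    intro t ht x hx
    exact hM (x, t) ⟨Metric.ball_subset_closedBall hx, uIoc_subset_uIcc ht⟩
  · exact intervalIntegrable_const
  · apply ae_of_all
    intro t _ x _
    exact hasDerivAt_pa g (hg.differentiable (by simp)) x t

/-- Full Fréchet derivative of `q ↦ ∫_0^{q.2} g(q.1,t) dt`. -/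
lemma hasFDerivAt_integral_param (g : ℝ × ℝ → ℝ) (hg : ContDiff ℝ (⊤ : ℕ∞) g) (p : ℝ × ℝ) :
    HasFDerivAt (fun q : ℝ × ℝ => ∫ t in (0:ℝ)..q.2, g (q.1, t))
      ((∫ t in (0:ℝ)..p.2, pa g (p.1, t)) • ContinuousLinearMap.fst ℝ ℝ ℝ
        + g p • ContinuousLinearMap.snd ℝ ℝ ℝ) p := by
  have hgc : Continuous g := hg.continuous
  have hint : ∀ (a c d : ℝ), IntervalIntegrable (fun t => g (a, t)) volume c d :=
    fun a c d => (hgc.comp (continuous_const.prodMk continuous_id)).intervalIntegrable c d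
  have hsplit : ∀ q : ℝ × ℝ, (∫ t in (0:ℝ)..q.2, g (q.1, t))
      = (∫ t in (0:ℝ)..p.2, g (q.1, t)) + ∫ t in p.2..q.2, g (q.1, t) :=
    fun q => (intervalIntegral.integral_add_adjacent_intervals (hint q.1 0 p.2)
      (hint q.1 p.2 q.2)).symm
  have hA : HasFDerivAt (fun q : ℝ × ℝ => ∫ t in (0:ℝ)..p.2, g (q.1, t))
      ((∫ t in (0:ℝ)..p.2, pa g (p.1, t)) • ContinuousLinearMap.fst ℝ ℝ ℝ) p :=
    (hasDerivAt_param g hg p.1 p.2).comp_hasFDerivAt p hasFDerivAt_fst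
  have hR : HasFDerivAt (fun q : ℝ × ℝ => ∫ t in p.2..q.2, g (q.1, t))
      (g p • ContinuousLinearMap.snd ℝ ℝ ℝ) p := by
    rw [hasFDerivAt_iff_isLittleO_nhds_zero]
    rw [Asymptotics.isLittleO_iff]
    intro c hc
    obtain ⟨δ, hδ, hδc⟩ := Metric.continuousAt_iff.mp (hgc.continuousAt (x := p)) c hc
    have hball : Metric.ball (0 : ℝ × ℝ) δ ∈ 𝓝 (0 : ℝ × ℝ) := Metric.ball_mem_nhds _ hδ
    filter_upwards [hball] with v hv
    have hv' : ‖v‖ < δ := by simpa [Metric.mem_ball] using hv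
    have hkey : ∀ t ∈ Set.uIoc p.2 ((p + v).2), ‖g ((p + v).1, t) - g p‖ ≤ c := by
      intro t ht
      rw [Prod.snd_add] at ht
      have ht' : |t - p.2| ≤ |v.2| := by
        rcases le_or_gt p.2 (p.2 + v.2) with h | h
        · rw [uIoc_of_le h] at ht
          rw [abs_of_nonneg (by linarith [ht.1.le])]
          rw [abs_of_nonneg (by linarith [ht.1.le, ht.2])]
          linarith [ht.2]
        · rw [uIoc_of_ge h.le] at ht
          rw [abs_of_nonpos (by linarith [ht.2])]
          rw [abs_of_nonpos (by linarith [ht.1, ht.2])]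
          linarith [ht.1]
      have hdist : dist ((p + v).1, t) p < δ := by
        rw [Prod.dist_eq]
        apply max_lt
        · have : dist (p + v).1 p.1 = |v.1| := by
            simp [Prod.fst_add, Real.dist_eq, abs_sub_comm]
          rw [this]
          exact lt_of_le_of_lt (by simpa [Real.norm_eq_abs] using norm_fst_le v) hv'
        · have : dist t p.2 = |t - p.2| := Real.dist_eq _ _
          rw [this]
          calc |t - p.2| ≤ |v.2| := ht'
            _ ≤ ‖v‖ := by simpa [Real.norm_eq_abs] using norm_snd_le v
            _ < δ := hv'
      have := hδc hdist
      rw [Real.dist_eq] at this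
      exact (le_of_lt (by simpa [Real.norm_eq_abs] using this))
    have heq : (∫ t in p.2..(p + v).2, g ((p + v).1, t)) - (∫ t in p.2..p.2, g (p.1, t))
        - (g p • ContinuousLinearMap.snd ℝ ℝ ℝ) v
        = ∫ t in p.2..((p + v).2), (g ((p + v).1, t) - g p) := by
      rw [intervalIntegral.integral_same, sub_zero]
      rw [intervalIntegral.integral_sub (hint (p + v).1 p.2 (p+v).2) intervalIntegrable_const]
      simp only [intervalIntegral.integral_const, Prod.snd_add, smul_eq_mul,
        ContinuousLinearMap.coe_smul', Pi.smul_apply, ContinuousLinearMap.coe_snd']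
      ring
    rw [heq]
    have hle := intervalIntegral.norm_integral_le_of_norm_le_const hkey
    refine hle.trans ?_
    have h1 : |(p + v).2 - p.2| = |v.2| := by rw [Prod.snd_add]; ring_nf
    rw [h1]
    have h2 : |v.2| ≤ ‖v‖ := by simpa [Real.norm_eq_abs] using norm_snd_le v
    exact mul_le_mul_of_nonneg_left h2 hc.le
  have := hA.add hR
  have hfun : (fun q : ℝ × ℝ => (∫ t in (0:ℝ)..p.2, g (q.1, t)) + ∫ t in p.2..q.2, g (q.1, t))
      = fun q : ℝ × ℝ => ∫ t in (0:ℝ)..q.2, g (q.1, t) := by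
    funext q; exact (hsplit q).symm
  rw [← hfun]; exact this

/-- Poincaré lemma on the plane: an analytic closed 1-form has an analytic potential. -/
lemma poincare (f g : ℝ × ℝ → ℝ) (hf : ContDiff ℝ (⊤ : ℕ∞) f) (hg : ContDiff ℝ (⊤ : ℕ∞) g)
    (hfg : ∀ p, pb f p = pa g p) :
    ∃ φ : ℝ × ℝ → ℝ, ContDiff ℝ (⊤ : ℕ∞) φ ∧
      ∀ p, HasFDerivAt φ (f p • ContinuousLinearMap.fst ℝ ℝ ℝ
        + g p • ContinuousLinearMap.snd ℝ ℝ ℝ) p := by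
  have hf' : ContDiff ℝ (⊤ : ℕ∞) f := hf.of_le (by simp)
  have hg' : ContDiff ℝ (⊤ : ℕ∞) g := hg.of_le (by simp)
  set φ : ℝ × ℝ → ℝ :=
    fun q => (∫ t in (0:ℝ)..q.1, f (t, 0)) + ∫ t in (0:ℝ)..q.2, g (q.1, t) with hφ
  have hder : ∀ p, HasFDerivAt φ (f p • ContinuousLinearMap.fst ℝ ℝ ℝ
      + g p • ContinuousLinearMap.snd ℝ ℝ ℝ) p := by
    intro p
    have hc : Continuous fun t : ℝ => f (t, 0) :=
      hf.continuous.comp (continuous_id.prodMk continuous_const)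
    have T1 : HasDerivAt (fun a => ∫ t in (0:ℝ)..a, f (t, 0)) (f (p.1, 0)) p.1 :=
      intervalIntegral.integral_hasDerivAt_right (hc.intervalIntegrable _ _)
        (hc.stronglyMeasurableAtFilter _ _) hc.continuousAt
    have hT1 : HasFDerivAt (fun q : ℝ × ℝ => ∫ t in (0:ℝ)..q.1, f (t, 0))
        (f (p.1, 0) • ContinuousLinearMap.fst ℝ ℝ ℝ) p :=
      T1.comp_hasFDerivAt p hasFDerivAt_fst
    have hT2 := hasFDerivAt_integral_param g hg' p
    have hI : (∫ t in (0:ℝ)..p.2, pa g (p.1, t)) = f (p.1, p.2) - f (p.1, 0) := by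
      have h1 : ∀ t ∈ uIcc (0:ℝ) p.2, HasDerivAt (fun t => f (p.1, t)) (pb f (p.1, t)) t :=
        fun t _ => hasDerivAt_pb f (hf'.differentiable (by simp)) p.1 t
      have h2 : IntervalIntegrable (fun t => pb f (p.1, t)) volume 0 p.2 :=
        ((continuous_pb f hf').comp (continuous_const.prodMk continuous_id)).intervalIntegrable _ _
      have h3 := intervalIntegral.integral_eq_sub_of_hasDerivAt h1 h2
      rw [← h3]
      apply intervalIntegral.integral_congr
      intro t _
      exact (hfg (p.1, t)).symm
    have hsum := hT1.add hT2
    rw [hI] at hsum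
    have halg : f (p.1, 0) • ContinuousLinearMap.fst ℝ ℝ ℝ
        + ((f (p.1, p.2) - f (p.1, 0)) • ContinuousLinearMap.fst ℝ ℝ ℝ
          + g p • ContinuousLinearMap.snd ℝ ℝ ℝ)
        = f p • ContinuousLinearMap.fst ℝ ℝ ℝ + g p • ContinuousLinearMap.snd ℝ ℝ ℝ := by
      have hp : f (p.1, p.2) = f p := by rw [Prod.mk.eta]
      rw [hp]
      module
    rw [halg] at hsum
    exact hsum
  have hφd : fderiv ℝ φ = fun q => f q • ContinuousLinearMap.fst ℝ ℝ ℝ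
      + g q • ContinuousLinearMap.snd ℝ ℝ ℝ := funext fun p => (hder p).fderiv
  refine ⟨φ, ?_, hder⟩
  refine contDiff_infty_iff_fderiv.mpr ⟨fun p => (hder p).differentiableAt, ?_⟩
  rw [hφd]
  exact (hf.smul contDiff_const).add (hg.smul contDiff_const)
section Transport

open Set

/-- Partial derivative in the `i`-th coordinate direction on `ℝ²`. -/
noncomputable def pd (i : Fin 2)
    (f : EuclideanSpace ℝ (Fin 2) → ℝ) (x : EuclideanSpace ℝ (Fin 2)) : ℝ :=
  fderiv ℝ f x (EuclideanSpace.single i 1)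

noncomputable def eE : EuclideanSpace ℝ (Fin 2) ≃L[ℝ] ℝ × ℝ :=
  (EuclideanSpace.equiv (Fin 2) ℝ).trans (ContinuousLinearEquiv.finTwoArrow ℝ ℝ)

lemma eE_apply (x : EuclideanSpace ℝ (Fin 2)) : eE x = (x 0, x 1) := rfl

lemma eE_single0 : eE (EuclideanSpace.single 0 1) = ((1:ℝ), (0:ℝ)) := by
  rw [eE_apply]
  simp [EuclideanSpace.single_apply]

lemma eE_single1 : eE (EuclideanSpace.single 1 1) = ((0:ℝ), (1:ℝ)) := by
  rw [eE_apply]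
  simp [EuclideanSpace.single_apply]

lemma pd_comp (F : ℝ × ℝ → ℝ) (x : EuclideanSpace ℝ (Fin 2)) (i : Fin 2) :
    pd i (F ∘ eE) x = fderiv ℝ F (eE x) (eE (EuclideanSpace.single i 1)) := by
  rw [pd, eE.comp_right_fderiv]
  rfl

/-- The plane Poincaré lemma transported to `EuclideanSpace ℝ (Fin 2)`. -/
lemma exists_potential (f g : EuclideanSpace ℝ (Fin 2) → ℝ)
    (hf : ContDiff ℝ (⊤ : ℕ∞) f) (hg : ContDiff ℝ (⊤ : ℕ∞) g)
    (h : ∀ x, pd 1 f x = pd 0 g x) :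
    ∃ φ : EuclideanSpace ℝ (Fin 2) → ℝ, ContDiff ℝ (⊤ : ℕ∞) φ ∧
      (∀ x, pd 0 φ x = f x) ∧ (∀ x, pd 1 φ x = g x) := by
  set F : ℝ × ℝ → ℝ := f ∘ eE.symm with hF
  set G : ℝ × ℝ → ℝ := g ∘ eE.symm with hG
  have hfF : f = F ∘ eE := by
    funext x; simp [hF, Function.comp]
  have hgG : g = G ∘ eE := by
    funext x; simp [hG, Function.comp]
  have hFc : ContDiff ℝ (⊤ : ℕ∞) F := hf.comp eE.symm.contDiff
  have hGc : ContDiff ℝ (⊤ : ℕ∞) G := hg.comp eE.symm.contDiff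
  have hrel : ∀ p, pb F p = pa G p := by
    intro p
    have h1 : pd 1 f (eE.symm p) = pb F p := by
      rw [hfF, pd_comp, eE_single1, eE.apply_symm_apply, pb]
    have h2 : pd 0 g (eE.symm p) = pa G p := by
      rw [hgG, pd_comp, eE_single0, eE.apply_symm_apply, pa]
    rw [← h1, ← h2]
    exact h (eE.symm p)
  obtain ⟨Φ, hΦc, hΦd⟩ := poincare F G hFc hGc hrel
  refine ⟨Φ ∘ eE, hΦc.comp eE.contDiff, ?_, ?_⟩
  · intro x
    have hfd : HasFDerivAt (Φ ∘ eE)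
        ((F (eE x) • ContinuousLinearMap.fst ℝ ℝ ℝ
          + G (eE x) • ContinuousLinearMap.snd ℝ ℝ ℝ).comp
          (eE : EuclideanSpace ℝ (Fin 2) →L[ℝ] ℝ × ℝ)) x :=
      (hΦd (eE x)).comp x eE.hasFDerivAt
    rw [pd, hfd.fderiv]
    have : (eE : EuclideanSpace ℝ (Fin 2) →L[ℝ] ℝ × ℝ) (EuclideanSpace.single 0 1)
        = ((1:ℝ), (0:ℝ)) := eE_single0
    rw [ContinuousLinearMap.comp_apply, this]
    have hx : F (eE x) = f x := by rw [hfF]; rfl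
    simp [hx]
  · intro x
    have hfd : HasFDerivAt (Φ ∘ eE)
        ((F (eE x) • ContinuousLinearMap.fst ℝ ℝ ℝ
          + G (eE x) • ContinuousLinearMap.snd ℝ ℝ ℝ).comp
          (eE : EuclideanSpace ℝ (Fin 2) →L[ℝ] ℝ × ℝ)) x :=
      (hΦd (eE x)).comp x eE.hasFDerivAt
    rw [pd, hfd.fderiv]
    have : (eE : EuclideanSpace ℝ (Fin 2) →L[ℝ] ℝ × ℝ) (EuclideanSpace.single 1 1)
        = ((0:ℝ), (1:ℝ)) := eE_single1
    rw [ContinuousLinearMap.comp_apply, this]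
    have hx : G (eE x) = g x := by rw [hgG]; rfl
    simp [hx]

end Transport

/-- On the plane, every smooth divergence-free symmetric stress field admits a
smooth Airy potential: the Airy operator parametrizes the Cauchy operator. -/
theorem cauchy_admits_airy_potential
    (σ11 σ12 σ22 : EuclideanSpace ℝ (Fin 2) → ℝ)
    (h11 : ContDiff ℝ (⊤ : ℕ∞) σ11) (h12 : ContDiff ℝ (⊤ : ℕ∞) σ12) (h22 : ContDiff ℝ (⊤ : ℕ∞) σ22)
    (hc1 : ∀ x, pd 0 σ11 x + pd 1 σ12 x = 0)
    (hc2 : ∀ x, pd 0 σ12 x + pd 1 σ22 x = 0) :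
    ∃ lam : EuclideanSpace ℝ (Fin 2) → ℝ, ContDiff ℝ (⊤ : ℕ∞) lam ∧
      (∀ x, σ11 x = pd 1 (pd 1 lam) x) ∧
      (∀ x, σ12 x = -pd 0 (pd 1 lam) x) ∧
      (∀ x, σ22 x = pd 0 (pd 0 lam) x) := by
  have hpdneg : ∀ (i : Fin 2) (σ : EuclideanSpace ℝ (Fin 2) → ℝ) x,
      pd i (fun y => -σ y) x = -pd i σ x := by
    intro i σ x
    rw [pd, pd, fderiv_fun_neg]
    rfl
  obtain ⟨u, hu, hu0, hu1⟩ := exists_potential (fun x => -σ12 x) σ11 h12.neg h11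
    (fun x => by rw [hpdneg]; linarith [hc1 x])
  obtain ⟨w, hw, hw0, hw1⟩ := exists_potential σ22 (fun x => -σ12 x) h22 h12.neg
    (fun x => by rw [hpdneg]; linarith [hc2 x])
  obtain ⟨lam, hlam, hl0, hl1⟩ := exists_potential w u hw hu
    (fun x => by rw [hw1 x, hu0 x])
  have hl0' : pd 0 lam = w := funext hl0
  have hl1' : pd 1 lam = u := funext hl1
  refine ⟨lam, hlam, ?_, ?_, ?_⟩
  · intro x; rw [hl1', hu1 x]
  · intro x; rw [hl1', hu0 x, neg_neg]
  · intro x; rw [hl0', hw0 x]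
end
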